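/- arXiv:1411.7200 — 4 statements merged into one kernel-verified Lean document; each statement's English description precedes it below -/
import Mathlib

section
/- Any sub-root function ψ : [0,∞) → [0,∞) (nonnegative, nondecreasing, with r ↦ ψ(r)/√r nonincreasing on (0,∞)) that is not identically zero and is continuous has a unique positive fixed point r* with ψ(r*) = r*. -/
/-!
Write `g r = ψ r / √r`. For `r > 0` the fixed-point equation `ψ r = r` reads `g r = √r`, and
`g` is nonincreasing while `√r` is strictly increasing, so `ψ r - r` changes sign at most once
on `(0,∞)`. It does change sign: if `ψ p > 0` then `g ≥ g p > 0` near `0`, where `√r` is small,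
and `g ≤ g p` far out, where `√r` is large. The intermediate value theorem gives the fixed point.
-/

open Set

namespace SubRoot

lemma div_sqrt_lt_sqrt_iff {a r : ℝ} (hr : 0 < r) : a / √r < √r ↔ a < r := by
  rw [div_lt_iff₀ (Real.sqrt_pos.2 hr), Real.mul_self_sqrt hr.le]

lemma sqrt_lt_div_sqrt_iff {a r : ℝ} (hr : 0 < r) : √r < a / √r ↔ r < a := by
  rw [lt_div_iff₀ (Real.sqrt_pos.2 hr), Real.mul_self_sqrt hr.le]

variable {ψ : ℝ → ℝ}

lemma apply_lt_self_of_apply_le_self (hψ : AntitoneOn (fun r ↦ ψ r / √r) (Ioi 0))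
    {x y : ℝ} (hx : 0 < x) (hfx : ψ x ≤ x) (hxy : x < y) : ψ y < y := by
  have hy : 0 < y := hx.trans hxy
  rw [← div_sqrt_lt_sqrt_iff hy]
  calc ψ y / √y ≤ ψ x / √x := hψ hx hy hxy.le
    _ ≤ x / √x := by gcongr
    _ = √x := Real.div_sqrt
    _ < √y := Real.sqrt_lt_sqrt hx.le hxy

lemma exists_lt_apply_self (hψ : AntitoneOn (fun r ↦ ψ r / √r) (Ioi 0))
    {p : ℝ} (hp : 0 < p) (hψp : 0 < ψ p) : ∃ a, 0 < a ∧ a < ψ a := by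
  set c := ψ p / √p
  have hc : 0 < c := div_pos hψp (Real.sqrt_pos.2 hp)
  refine ⟨min p (c ^ 2 / 2), by positivity, ?_⟩
  have ha : 0 < min p (c ^ 2 / 2) := by positivity
  rw [← sqrt_lt_div_sqrt_iff ha]
  calc √(min p (c ^ 2 / 2)) < c := by
        rw [Real.sqrt_lt' hc]
        exact (min_le_right _ _).trans_lt (by linarith [pow_pos hc 2])
    _ ≤ _ := hψ ha hp (min_le_left _ _)

lemma exists_apply_lt_self (hψ : AntitoneOn (fun r ↦ ψ r / √r) (Ioi 0)) :
    ∃ b, 0 < b ∧ ψ b < b := by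
  set b := max 1 (ψ 1 ^ 2 + 1)
  have hb : 0 < b := one_pos.trans_le (le_max_left _ _)
  refine ⟨b, hb, ?_⟩
  rw [← div_sqrt_lt_sqrt_iff hb]
  calc ψ b / √b ≤ ψ 1 / √1 := hψ (mem_Ioi.2 one_pos) hb (le_max_left _ _)
    _ = ψ 1 := by rw [Real.sqrt_one, div_one]
    _ < √b := Real.lt_sqrt_of_sq_lt ((lt_add_one _).trans_le (le_max_right _ _))

lemma exists_apply_eq_self_of_sign_change (hcont : ContinuousOn ψ (Ioi 0))
    {a b : ℝ} (ha : 0 < a) (hb : 0 < b) (hfa : a < ψ a) (hfb : ψ b < b) :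
    ∃ r, 0 < r ∧ ψ r = r := by
  have hpos : uIcc a b ⊆ Ioi 0 := fun r hr ↦ (lt_min ha hb).trans_le hr.1
  have hzero : (0 : ℝ) ∈ uIcc (ψ a - a) (ψ b - b) :=
    mem_uIcc.2 (Or.inr ⟨by linarith, by linarith⟩)
  obtain ⟨r, hr, hfr⟩ :=
    intermediate_value_uIcc ((hcont.mono hpos).sub continuousOn_id) hzero
  exact ⟨r, hpos hr, sub_eq_zero.1 hfr⟩

end SubRoot

open SubRoot in
/-- A sub-root function (nonnegative, nondecreasing on `[0,∞)`, with `r ↦ ψ r / √r`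
nonincreasing on `(0,∞)`) which is continuous and not identically zero on `[0,∞)`
has a unique positive fixed point. -/
theorem stmt_6 (ψ : ℝ → ℝ)
    (hnn : ∀ r, 0 ≤ r → 0 ≤ ψ r)
    (hmono : MonotoneOn ψ (Set.Ici (0 : ℝ)))
    (hsub : ∀ r s : ℝ, 0 < r → r ≤ s → ψ s / Real.sqrt s ≤ ψ r / Real.sqrt r)
    (hcont : ContinuousOn ψ (Set.Ici (0 : ℝ)))
    (hnz : ∃ r : ℝ, 0 ≤ r ∧ ψ r ≠ 0) :
    ∃! r : ℝ, 0 < r ∧ ψ r = r := by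
  have hanti : AntitoneOn (fun r ↦ ψ r / √r) (Ioi 0) := fun r hr s _ hrs ↦ hsub r s hr hrs
  obtain ⟨p, hp, hψp⟩ : ∃ p, 0 < p ∧ 0 < ψ p := by
    obtain ⟨r, hr, hψr⟩ := hnz
    rcases hr.lt_or_eq with hr | rfl
    · exact ⟨r, hr, (hnn r hr.le).lt_of_ne' hψr⟩
    · exact ⟨1, one_pos, ((hnn 0 le_rfl).lt_of_ne' hψr).trans_le
        (hmono (mem_Ici.2 le_rfl) (mem_Ici.2 zero_le_one) zero_le_one)⟩
  obtain ⟨a, ha, hfa⟩ := exists_lt_apply_self hanti hp hψp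
  obtain ⟨b, hb, hfb⟩ := exists_apply_lt_self hanti
  obtain ⟨r, hr, hfr⟩ :=
    exists_apply_eq_self_of_sign_change (hcont.mono Ioi_subset_Ici_self) ha hb hfa hfb
  refine ⟨r, ⟨hr, hfr⟩, fun s ⟨hs, hfs⟩ ↦ ?_⟩
  rcases lt_trichotomy s r with hsr | rfl | hrs
  · exact absurd hfr (apply_lt_self_of_apply_le_self hanti hs hfs.le hsr).ne
  · rfl
  · exact absurd hfs (apply_lt_self_of_apply_le_self hanti hr hfr.le hrs).ne
end

section
/- Let C = {c_1,...,c_N} be a finite set and F a finite class of functions f : C → ℝ with f(x) ∈ [−1,1], and suppose E[f(Z)] = 0 for Z uniform on C. Let Q_m = sup_{f∈F} Σ_{i=1}^m f(X_i) for X_1,...,X_m sampled uniformly with replacement, and Q'_m = sup_{f∈F} Σ_{i=1}^m f(Z_i) for Z_1,...,Z_m sampled uniformly without replacement. Then 0 ≤ E[Q_m] − E[Q'_m] ≤ 2 m³ / N. -/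
/-!
Couple the two samples: given a sequence `ω` drawn with replacement, let `σ` be a uniformly
random injective sequence whose range contains the range of `ω` (the kernel `coverWeight`).
The permutations of the ground set preserve this kernel and act transitively on injective
sequences, so `σ` is uniform among them; and swapping two points of the range of `σ` shows that,
given `σ`, each `ω i` is uniform on that range. Hence `E[∑ i, f (ω i) | σ] = ∑ i, f (σ i)` for
every `f`, and since a maximum of linear functionals is convex, Jensen's inequality gives
`E[Q'] ≤ E[Q]`.

For the upper bound, the injective sequences make up the fraction
`N (N - 1) ⋯ (N - m + 1) / N ^ m ≥ 1 - m ^ 2 / N` of all sequences, and both suprema lie in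
`[-m, m]`, so the two averages differ by at most `2 m · m ^ 2 / N`.
-/

open Finset

section Covering

variable {ι α : Type*}

lemma image_perm_smul [Fintype ι] [DecidableEq α] (π : Equiv.Perm α) (ω : ι → α) :
    univ.image (π • ω) = (univ.image ω).image π := by
  rw [image_image]; rfl

lemma image_perm_smul_embedding [Fintype ι] [DecidableEq α] (π : Equiv.Perm α) (σ : ι ↪ α) :
    univ.image (π • σ) = (univ.image σ).image π := by
  rw [image_image]; rfl

lemma image_subset_image_smul_iff [Fintype ι] [DecidableEq α] (π : Equiv.Perm α) (ω : ι → α)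
    (σ : ι ↪ α) :
    univ.image (π • ω) ⊆ univ.image (π • σ) ↔ univ.image ω ⊆ univ.image σ := by
  rw [image_perm_smul, image_perm_smul_embedding, image_subset_image_iff π.injective]

variable [Fintype ι] [Fintype α] [DecidableEq α]

lemma exists_embedding_image_superset (h : Fintype.card ι ≤ Fintype.card α) (ω : ι → α) :
    ∃ σ : ι ↪ α, univ.image ω ⊆ univ.image σ := by
  obtain ⟨T, hωT, -, hT⟩ := exists_subsuperset_card_eq (subset_univ (univ.image ω))
    (card_image_le.trans_eq card_univ) (h.trans_eq card_univ.symm)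
  let e : ι ≃ T := Fintype.equivOfCardEq (by simp [hT])
  exact ⟨e.toEmbedding.trans (Function.Embedding.subtype _),
    hωT.trans fun x hx => mem_image.2 ⟨e.symm ⟨x, hx⟩, mem_univ _, by simp⟩⟩

noncomputable def coverCount (ω : ι → α) : ℕ := #{σ : ι ↪ α | univ.image ω ⊆ univ.image σ}

noncomputable def coverWeight (ω : ι → α) (σ : ι ↪ α) : ℝ :=
  if univ.image ω ⊆ univ.image σ then (coverCount ω : ℝ)⁻¹ else 0

lemma coverWeight_nonneg (ω : ι → α) (σ : ι ↪ α) : 0 ≤ coverWeight ω σ := by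
  unfold coverWeight; split_ifs <;> positivity

lemma sum_coverWeight (h : Fintype.card ι ≤ Fintype.card α) (ω : ι → α) :
    ∑ σ, coverWeight ω σ = 1 := by
  obtain ⟨σ, hσ⟩ := exists_embedding_image_superset h ω
  have : (coverCount ω : ℝ) ≠ 0 := Nat.cast_ne_zero.2 <| card_ne_zero.2 ⟨σ, by simpa using hσ⟩
  simp only [coverWeight, sum_ite, sum_const_zero, add_zero, sum_const, nsmul_eq_mul]
  exact mul_inv_cancel₀ this

lemma coverCount_smul (π : Equiv.Perm α) (ω : ι → α) : coverCount (π • ω) = coverCount ω := by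
  refine card_nbij' (π⁻¹ • ·) (π • ·) (fun σ hσ => ?_) (fun σ hσ => ?_)
    (fun σ _ => smul_inv_smul π σ) (fun σ _ => inv_smul_smul π σ)
  · simp only [coe_filter, mem_univ, true_and, Set.mem_ofPred_eq] at hσ ⊢
    rwa [← image_subset_image_smul_iff π, smul_inv_smul]
  · simp only [coe_filter, mem_univ, true_and, Set.mem_ofPred_eq] at hσ ⊢
    rwa [image_subset_image_smul_iff π]

lemma coverWeight_smul (π : Equiv.Perm α) (ω : ι → α) (σ : ι ↪ α) :
    coverWeight (π • ω) (π • σ) = coverWeight ω σ := by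
  simp only [coverWeight, coverCount_smul, image_subset_image_smul_iff]

lemma image_subset_of_coverWeight_ne_zero {ω : ι → α} {σ : ι ↪ α} (h : coverWeight ω σ ≠ 0) :
    univ.image ω ⊆ univ.image σ := by
  by_contra hω
  exact h (if_neg hω)

lemma coverWeight_congr_right {σ τ : ι ↪ α} (h : univ.image σ = univ.image τ) (ω : ι → α) :
    coverWeight ω σ = coverWeight ω τ := by
  rw [coverWeight, coverWeight, h]

variable [DecidableEq ι]

lemma sum_coverWeight_smul_right (π : Equiv.Perm α) (σ : ι ↪ α) :
    ∑ ω, coverWeight ω (π • σ) = ∑ ω, coverWeight ω σ :=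
  (Fintype.sum_equiv (MulAction.toPerm π) (fun ω => coverWeight ω σ)
    (fun ω => coverWeight ω (π • σ)) fun ω => (coverWeight_smul π ω σ).symm).symm

lemma card_mul_sum_coverWeight (h : Fintype.card ι ≤ Fintype.card α) (σ : ι ↪ α) :
    (Fintype.card (ι ↪ α) : ℝ) * ∑ ω, coverWeight ω σ = Fintype.card (ι → α) := by
  calc (Fintype.card (ι ↪ α) : ℝ) * ∑ ω, coverWeight ω σ
      = ∑ τ : ι ↪ α, ∑ ω, coverWeight ω τ := by
        rw [← nsmul_eq_mul, ← card_univ, ← sum_const]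
        refine sum_congr rfl fun τ _ => ?_
        obtain ⟨π, rfl⟩ := Equiv.Perm.exists_smul_eq_embedding σ τ
        exact (sum_coverWeight_smul_right π σ).symm
    _ = ∑ ω, ∑ τ, coverWeight ω τ := sum_comm
    _ = Fintype.card (ι → α) := by simp [sum_coverWeight h]

lemma sum_coverWeight_mul_comp (σ : ι ↪ α) (i : ι) (g : α → ℝ) :
    ∑ ω, coverWeight ω σ * g (ω i)
      = ∑ x ∈ univ.image σ, (∑ ω with ω i = x, coverWeight ω σ) * g x := by
  have hsupport : ∀ ω ∈ univ, coverWeight ω σ * g (ω i) ≠ 0 → ω i ∈ univ.image σ :=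
    fun ω _ hω => image_subset_of_coverWeight_ne_zero (left_ne_zero_of_mul hω)
      (mem_image_of_mem ω (mem_univ i))
  rw [← sum_filter_of_ne hsupport, ← sum_fiberwise_eq_sum_filter]
  refine sum_congr rfl fun x _ => ?_
  rw [sum_mul]
  exact sum_congr rfl fun ω hω => by rw [(mem_filter.1 hω).2]

lemma sum_coverWeight_filter_eq (σ : ι ↪ α) (i : ι) {x y : α} (hx : x ∈ univ.image σ)
    (hy : y ∈ univ.image σ) :
    ∑ ω with ω i = x, coverWeight ω σ = ∑ ω with ω i = y, coverWeight ω σ := by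
  set π := Equiv.swap x y
  have hπσ : univ.image (π • σ) = univ.image σ := by
    rw [image_perm_smul_embedding, ← Equiv.coe_toEmbedding, ← map_eq_image]
    refine map_perm fun z hz => ?_
    rcases (Equiv.swap_apply_ne_self_iff.1 hz).2 with rfl | rfl <;> assumption
  rw [sum_filter, sum_filter]
  refine Fintype.sum_equiv (MulAction.toPerm π) _ _ fun ω => ?_
  rw [MulAction.toPerm_apply, coverWeight_congr_right hπσ.symm (π • ω), coverWeight_smul,
    Pi.smul_apply, Equiv.Perm.smul_def]
  simp only [π, Equiv.swap_apply_eq_iff, Equiv.swap_apply_right]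

lemma card_mul_sum_coverWeight_filter (σ : ι ↪ α) (i : ι) {x : α} (hx : x ∈ univ.image σ) :
    (Fintype.card ι : ℝ) * ∑ ω with ω i = x, coverWeight ω σ = ∑ ω, coverWeight ω σ := by
  have h := sum_coverWeight_mul_comp σ i fun _ => 1
  simp only [mul_one] at h
  rw [h, sum_congr rfl fun y hy => sum_coverWeight_filter_eq σ i hy hx, sum_const,
    card_image_of_injective _ σ.injective, card_univ, nsmul_eq_mul]

lemma sum_coverWeight_mul_sum (σ : ι ↪ α) (f : α → ℝ) :
    ∑ ω, coverWeight ω σ * ∑ i, f (ω i) = (∑ ω, coverWeight ω σ) * ∑ i, f (σ i) := by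
  rcases isEmpty_or_nonempty ι with hι | hι
  · simp
  have hcard : (Fintype.card ι : ℝ) ≠ 0 := by positivity
  have hcoord (i : ι) : ∑ ω, coverWeight ω σ * f (ω i)
      = (∑ ω, coverWeight ω σ) / Fintype.card ι * ∑ j, f (σ j) := by
    rw [sum_coverWeight_mul_comp, ← sum_image fun a _ b _ h => σ.injective h, mul_sum]
    refine sum_congr rfl fun x hx => ?_
    rw [eq_div_of_mul_eq hcard ((mul_comm _ _).trans (card_mul_sum_coverWeight_filter σ i hx))]
  calc ∑ ω, coverWeight ω σ * ∑ i, f (ω i) = ∑ i, ∑ ω, coverWeight ω σ * f (ω i) := by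
        simp_rw [mul_sum]; exact sum_comm
    _ = Fintype.card ι * ((∑ ω, coverWeight ω σ) / Fintype.card ι * ∑ j, f (σ j)) := by
        simp only [hcoord, sum_const, card_univ, nsmul_eq_mul]
    _ = (∑ ω, coverWeight ω σ) * ∑ i, f (σ i) := by field_simp

theorem average_sup_sum_embedding_le (h : Fintype.card ι ≤ Fintype.card α)
    (F : Finset (α → ℝ)) (hF : F.Nonempty) :
    (Fintype.card (ι ↪ α) : ℝ)⁻¹ * ∑ σ : ι ↪ α, F.sup' hF (fun f => ∑ i, f (σ i))
      ≤ (Fintype.card (ι → α) : ℝ)⁻¹ * ∑ ω : ι → α, F.sup' hF (fun f => ∑ i, f (ω i)) := by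
  set Q : (ι → α) → ℝ := fun ω => F.sup' hF fun f => ∑ i, f (ω i)
  obtain ⟨σ₀⟩ := Function.Embedding.nonempty_of_card_le h
  have hE : (0 : ℝ) < Fintype.card (ι ↪ α) := by
    have : Nonempty (ι ↪ α) := ⟨σ₀⟩
    exact_mod_cast Fintype.card_pos
  have hP : (0 : ℝ) < Fintype.card (ι → α) := by
    have : Nonempty (ι → α) := ⟨σ₀⟩
    exact_mod_cast Fintype.card_pos
  have hmass (σ : ι ↪ α) : ∑ ω, coverWeight ω σ = Fintype.card (ι → α) / Fintype.card (ι ↪ α) :=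
    eq_div_of_mul_eq hE.ne' ((mul_comm _ _).trans (card_mul_sum_coverWeight h σ))
  have hjensen (σ : ι ↪ α) : (∑ ω, coverWeight ω σ) * Q σ ≤ ∑ ω, coverWeight ω σ * Q ω := by
    obtain ⟨f, hf, hfσ⟩ := exists_mem_eq_sup' hF fun f => ∑ i, f (σ i)
    simp only [Q]
    rw [hfσ, ← sum_coverWeight_mul_sum]
    exact sum_le_sum fun ω _ =>
      mul_le_mul_of_nonneg_left (le_sup' (fun f => ∑ i, f (ω i)) hf) (coverWeight_nonneg ω σ)
  have hscaled : Fintype.card (ι → α) / Fintype.card (ι ↪ α) * ∑ σ : ι ↪ α, Q σ ≤ ∑ ω, Q ω :=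
    calc _ = ∑ σ : ι ↪ α, (∑ ω, coverWeight ω σ) * Q σ := by simp only [mul_sum, hmass]
      _ ≤ ∑ σ : ι ↪ α, ∑ ω, coverWeight ω σ * Q ω := sum_le_sum fun σ _ => hjensen σ
      _ = ∑ ω, (∑ σ, coverWeight ω σ) * Q ω := by rw [sum_comm]; simp only [sum_mul]
      _ = ∑ ω, Q ω := by simp only [sum_coverWeight h, one_mul]
  calc (Fintype.card (ι ↪ α) : ℝ)⁻¹ * ∑ σ : ι ↪ α, Q σ
      = (Fintype.card (ι → α) : ℝ)⁻¹
          * (Fintype.card (ι → α) / Fintype.card (ι ↪ α) * ∑ σ : ι ↪ α, Q σ) := by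
        field_simp
    _ ≤ (Fintype.card (ι → α) : ℝ)⁻¹ * ∑ ω, Q ω := by gcongr

end Covering

lemma abs_sup'_sum_le {ι α : Type*} [Fintype ι] {F : Finset (α → ℝ)} (hF : F.Nonempty)
    (hbound : ∀ f ∈ F, ∀ x, f x ∈ Set.Icc (-1 : ℝ) 1) (ω : ι → α) :
    |F.sup' hF fun f => ∑ i, f (ω i)| ≤ Fintype.card ι := by
  obtain ⟨f, hf, hfω⟩ := exists_mem_eq_sup' hF fun f => ∑ i, f (ω i)
  rw [hfω]
  calc |∑ i, f (ω i)| ≤ ∑ i, |f (ω i)| := abs_sum_le_sum_abs _ _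
    _ ≤ ∑ _i : ι, (1 : ℝ) := sum_le_sum fun i _ => abs_le.2 (hbound f hf (ω i))
    _ = Fintype.card ι := by simp

lemma average_sub_average_comp_le {β γ : Type*} [Fintype β] [Fintype γ] [Nonempty β]
    {e : β → γ} (he : Function.Injective e) {g : γ → ℝ} {M : ℝ} (hg : ∀ c, |g c| ≤ M) :
    (Fintype.card γ : ℝ)⁻¹ * ∑ c, g c - (Fintype.card β : ℝ)⁻¹ * ∑ b, g (e b)
      ≤ 2 * M * (1 - Fintype.card β / Fintype.card γ) := by
  classical
  have hB : (0 : ℝ) < Fintype.card β := by exact_mod_cast Fintype.card_pos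
  have hBΓ : Fintype.card β ≤ Fintype.card γ := Fintype.card_le_of_injective e he
  have hBΓ' : (Fintype.card β : ℝ) ≤ Fintype.card γ := by exact_mod_cast hBΓ
  have hΓ : (0 : ℝ) < Fintype.card γ := hB.trans_le hBΓ'
  set s := univ.map ⟨e, he⟩
  have hsplit : ∑ c, g c = ∑ b, g (e b) + ∑ c ∈ sᶜ, g c := by
    rw [← sum_add_sum_compl s, sum_map]; rfl
  have hcompl : ∑ c ∈ sᶜ, g c ≤ (Fintype.card γ - Fintype.card β) * M := by
    have := sum_le_card_nsmul sᶜ g M fun c _ => (le_abs_self _).trans (hg c)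
    rwa [card_compl, card_map, card_univ, nsmul_eq_mul, Nat.cast_sub hBΓ] at this
  have himage : -(Fintype.card β * M) ≤ ∑ b, g (e b) := by
    have := card_nsmul_le_sum univ (g ∘ e) (-M) fun b _ => neg_le_of_abs_le (hg (e b))
    rwa [card_univ, nsmul_eq_mul, mul_neg] at this
  rw [hsplit]
  field_simp
  nlinarith [mul_le_mul_of_nonneg_left himage (sub_nonneg.2 hBΓ')]

lemma one_sub_descFactorial_div_pow_le {N m : ℕ} (hm : m ≤ N) :
    1 - (N.descFactorial m : ℝ) / N ^ m ≤ m ^ 2 / N := by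
  rcases N.eq_zero_or_pos with rfl | hN
  · obtain rfl : m = 0 := by omega
    simp
  have hN' : (0 : ℝ) < N := by exact_mod_cast hN
  have hbernoulli : 1 - m ^ 2 / N ≤ (1 - m / N : ℝ) ^ m := by
    have hmN : (m : ℝ) / N ≤ 1 := (div_le_one hN').2 (by exact_mod_cast hm)
    calc 1 - m ^ 2 / N = 1 + m * -(m / N : ℝ) := by ring
      _ ≤ (1 + -(m / N : ℝ)) ^ m := one_add_mul_le_pow (by linarith) m
      _ = (1 - m / N : ℝ) ^ m := by ring
  have hdesc : ((N - m : ℕ) : ℝ) ^ m ≤ N.descFactorial m := by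
    exact_mod_cast (Nat.pow_le_pow_left (by omega) m).trans (Nat.pow_sub_le_descFactorial N m)
  have hpow : (1 - m / N : ℝ) ^ m = ((N - m : ℕ) : ℝ) ^ m / N ^ m := by
    rw [Nat.cast_sub hm, ← div_pow, sub_div, div_self hN'.ne']
  have := div_le_div_of_nonneg_right hdesc (by positivity : (0 : ℝ) ≤ N ^ m)
  linarith

theorem stmt_9_general (N m : ℕ) (hm : m ≤ N)
    (F : Finset (Fin N → ℝ)) (hF : F.Nonempty)
    (hbound : ∀ f ∈ F, ∀ x, f x ∈ Set.Icc (-1 : ℝ) 1) :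
    0 ≤ (1 / (N : ℝ) ^ m) * (∑ ω : Fin m → Fin N, F.sup' hF fun f => ∑ i, f (ω i))
        - (1 / (Fintype.card (Fin m ↪ Fin N) : ℝ)) *
            (∑ ω : Fin m ↪ Fin N, F.sup' hF fun f => ∑ i, f (ω i))
    ∧ (1 / (N : ℝ) ^ m) * (∑ ω : Fin m → Fin N, F.sup' hF fun f => ∑ i, f (ω i))
        - (1 / (Fintype.card (Fin m ↪ Fin N) : ℝ)) *
            (∑ ω : Fin m ↪ Fin N, F.sup' hF fun f => ∑ i, f (ω i))
      ≤ 2 * (m : ℝ) ^ 3 / (N : ℝ) := by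
  have hcard : Fintype.card (Fin m) ≤ Fintype.card (Fin N) := by simpa using hm
  have hNm : (Fintype.card (Fin m → Fin N) : ℝ) = (N : ℝ) ^ m := by simp
  have hemb : (Fintype.card (Fin m ↪ Fin N) : ℝ) = N.descFactorial m := by
    simp [Fintype.card_embedding_eq]
  have : Nonempty (Fin m ↪ Fin N) := Function.Embedding.nonempty_of_card_le hcard
  rw [← hNm, one_div, one_div]
  refine ⟨sub_nonneg.2 (average_sup_sum_embedding_le hcard F hF), ?_⟩
  calc _ ≤ 2 * (Fintype.card (Fin m) : ℝ)
          * (1 - Fintype.card (Fin m ↪ Fin N) / Fintype.card (Fin m → Fin N)) :=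
        average_sub_average_comp_le DFunLike.coe_injective (abs_sup'_sum_le hF hbound)
    _ ≤ 2 * m * (m ^ 2 / N) := by
        rw [hemb, hNm, Fintype.card_fin]
        gcongr
        exact one_sub_descFactorial_div_pow_le hm
    _ = 2 * (m : ℝ) ^ 3 / N := by ring

/-- `0 ≤ E[Q_m] − E[Q'_m] ≤ 2 m³ / N`, where `Q_m` (resp. `Q'_m`) is the supremum over a
finite mean-zero class `F` of `[-1,1]`-valued functions of the sum over a sample of size `m`
drawn uniformly with (resp. without) replacement from a set of size `N`. -/
theorem stmt_9 (N m : ℕ) (hN : 0 < N) (hm : m ≤ N)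
    (F : Finset (Fin N → ℝ)) (hF : F.Nonempty)
    (hbound : ∀ f ∈ F, ∀ x, f x ∈ Set.Icc (-1 : ℝ) 1)
    (hmean : ∀ f ∈ F, ∑ x, f x = 0) :
    0 ≤ (1 / (N : ℝ) ^ m) * (∑ ω : Fin m → Fin N, F.sup' hF fun f => ∑ i, f (ω i))
        - (1 / (Fintype.card (Fin m ↪ Fin N) : ℝ)) *
            (∑ ω : Fin m ↪ Fin N, F.sup' hF fun f => ∑ i, f (ω i))
    ∧ (1 / (N : ℝ) ^ m) * (∑ ω : Fin m → Fin N, F.sup' hF fun f => ∑ i, f (ω i))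
        - (1 / (Fintype.card (Fin m ↪ Fin N) : ℝ)) *
            (∑ ω : Fin m ↪ Fin N, F.sup' hF fun f => ∑ i, f (ω i))
      ≤ 2 * (m : ℝ) ^ 3 / (N : ℝ) :=
  stmt_9_general N m hm F hF hbound
end

section
/- Let C be a finite set of N vectors {v_1,...,v_N} ⊂ ℝ^d, let U_1,...,U_m be sampled uniformly with replacement from C and W_1,...,W_m sampled uniformly without replacement from C (m ≤ N). Then for any continuous convex function F : ℝ^d → ℝ, E[F(Σ_{i=1}^m W_i)] ≤ E[F(Σ_{i=1}^m U_i)]. -/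
open Finset

variable {m N : ℕ}

/-- The "range" of a map as a Finset. -/
private def rng (f : Fin m → Fin N) : Finset (Fin N) := Finset.univ.image f

private lemma card_rng_comp {K : ℕ} {ψ : Fin N → Fin K} (hψ : Function.Injective ψ)
    (g : Fin m → Fin N) : (rng (ψ ∘ g)).card = (rng g).card := by
  unfold rng
  rw [← Finset.image_image, Finset.card_image_of_injective _ hψ]

/-- number of injections whose range contains the range of `f` -/
private noncomputable def Bcard (f : Fin m → Fin N) : ℕ :=
  (Finset.univ.filter (fun ω : Fin m ↪ Fin N => rng f ⊆ rng ⇑ω)).card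

private lemma exists_perm_image {α : Type*} [Fintype α] [DecidableEq α] {s t : Finset α}
    (h : s.card = t.card) : ∃ σ : Equiv.Perm α, s.image ⇑σ = t := by
  have h2 : (sᶜ : Finset α).card = (tᶜ : Finset α).card := by
    simp [Finset.card_compl, h]
  let e1' : {x // x ∈ s} ≃ {x // x ∈ t} := Finset.equivOfCardEq h
  let e2' : {x // ¬ x ∈ s} ≃ {x // ¬ x ∈ t} := by
    refine (Equiv.subtypeEquivRight ?_).trans
      ((Finset.equivOfCardEq h2).trans (Equiv.subtypeEquivRight ?_)) <;>
      intro x <;> simp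
  refine ⟨Equiv.subtypeCongr e1' e2', ?_⟩
  apply Finset.eq_of_subset_of_card_le
  · intro y hy
    simp only [Finset.mem_image] at hy
    obtain ⟨x, hx, rfl⟩ := hy
    have : Equiv.subtypeCongr e1' e2' x = ↑(e1' ⟨x, hx⟩) := by
      simp [Equiv.subtypeCongr, hx]
    rw [this]
    exact (e1' ⟨x, hx⟩).2
  · rw [Finset.card_image_of_injective _ (Equiv.injective _), h]

private lemma Bcard_eq {f f' : Fin m → Fin N} (h : (rng f).card = (rng f').card) :
    Bcard f = Bcard f' := by
  classical
  obtain ⟨σ, hσ⟩ := exists_perm_image h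
  unfold Bcard
  refine Finset.card_bij' (fun ω _ => ω.trans σ.toEmbedding)
    (fun ω _ => ω.trans σ.symm.toEmbedding) ?hi ?hj ?li ?ri
  case hi =>
    intro ω hω
    simp only [Finset.mem_filter, Finset.mem_univ, true_and] at hω ⊢
    have hr : rng (⇑(ω.trans σ.toEmbedding)) = (rng ⇑ω).image ⇑σ := by
      ext x
      simp [rng, Function.Embedding.trans_apply, Equiv.coe_toEmbedding]
    rw [hr, ← hσ]
    exact Finset.image_subset_image hω
  case hj =>
    intro ω hω
    simp only [Finset.mem_filter, Finset.mem_univ, true_and] at hω ⊢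
    have hr : rng (⇑(ω.trans σ.symm.toEmbedding)) = (rng ⇑ω).image ⇑σ.symm := by
      ext x
      simp [rng, Function.Embedding.trans_apply, Equiv.coe_toEmbedding]
    rw [hr]
    intro x hx
    simp only [Finset.mem_image]
    refine ⟨σ x, hω ?_, by simp⟩
    rw [← hσ]
    exact Finset.mem_image_of_mem _ hx
  case li => intro ω hω; ext i; simp
  case ri => intro ω hω; ext i; simp

private lemma Bcard_pos (hm : m ≤ N) (f : Fin m → Fin N) : 0 < Bcard f := by
  classical
  have hc : (rng f).card ≤ m := by
    simpa [rng] using (Finset.card_image_le (s := (Finset.univ : Finset (Fin m))) (f := f)).trans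
      (by simp)
  obtain ⟨t, hsub, -, hcard⟩ := Finset.exists_subsuperset_card_eq
    (Finset.subset_univ (rng f)) hc (by simpa using hm)
  let e : Fin m ≃ t := (t.equivFin.trans (finCongr hcard)).symm
  let ω : Fin m ↪ Fin N := e.toEmbedding.trans (Function.Embedding.subtype _)
  have hω : rng f ⊆ rng ⇑ω := by
    refine hsub.trans ?_
    intro x hx
    simp only [rng, Finset.mem_image, Finset.mem_univ, true_and]
    exact ⟨e.symm ⟨x, hx⟩, by simp [ω]⟩
  rw [Bcard, Finset.card_pos]
  exact ⟨ω, by simpa using hω⟩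

private lemma sum_factor {E : Type*} [AddCommMonoid E] (ω : Fin m ↪ Fin N)
    (φ : (Fin m → Fin N) → E) :
    ∑ f ∈ Finset.univ.filter (fun f => rng f ⊆ rng ⇑ω), φ f
      = ∑ g : Fin m → Fin m, φ (⇑ω ∘ g) := by
  classical
  have hset : Finset.univ.filter (fun f => rng f ⊆ rng ⇑ω)
      = Finset.univ.image (fun g : Fin m → Fin m => ⇑ω ∘ g) := by
    ext f
    simp only [Finset.mem_filter, Finset.mem_univ, true_and, Finset.mem_image]
    constructor
    · intro hf
      have : ∀ i, ∃ j, ω j = f i := by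
        intro i
        have : f i ∈ rng ⇑ω := hf (by simp [rng])
        simpa [rng, eq_comm] using this
      choose g hg using this
      exact ⟨g, by funext i; simp [hg]⟩
    · rintro ⟨g, rfl⟩
      intro x hx
      simp only [rng, Finset.mem_image, Finset.mem_univ, true_and, Function.comp] at hx ⊢
      obtain ⟨i, rfl⟩ := hx
      exact ⟨g i, rfl⟩
  rw [hset, Finset.sum_image]
  intro g _ g' _ h
  funext i
  exact ω.injective (congrFun h i)

/-- Key symmetry lemma. -/
private lemma key_smul {E : Type*} [AddCommGroup E] [Module ℝ E]
    (c : (Fin m → Fin m) → ℝ) (hc : ∀ (σ : Equiv.Perm (Fin m)) g, c (⇑σ ∘ g) = c g)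
    (u : Fin m → E) :
    ∑ g : Fin m → Fin m, c g • (∑ i, u (g i)) = (∑ g : Fin m → Fin m, c g) • ∑ j, u j := by
  classical
  rcases Nat.eq_zero_or_pos m with hm | hm
  · subst hm; simp
  set cnt : (Fin m → Fin m) → Fin m → ℕ :=
    fun g j => (Finset.univ.filter (fun i => g i = j)).card with hcnt
  have h1 : ∀ g : Fin m → Fin m, (∑ i, u (g i)) = ∑ j, ((cnt g j : ℝ)) • u j := by
    intro g
    rw [← Finset.sum_fiberwise' Finset.univ g u]
    refine Finset.sum_congr rfl fun j _ => ?_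
    rw [Finset.sum_const]
    exact (Nat.cast_smul_eq_nsmul ℝ _ _).symm
  set K : Fin m → ℝ := fun j => ∑ g : Fin m → Fin m, c g * cnt g j with hK
  have hswap : ∀ j j', K j = K j' := by
    intro j j'
    rw [hK]
    refine Fintype.sum_equiv (Equiv.piCongrRight (fun _ : Fin m => Equiv.swap j j'))
      _ _ (fun g => ?_)
    have hco : ⇑(Equiv.piCongrRight (fun _ : Fin m => Equiv.swap j j')) g
        = ⇑(Equiv.swap j j') ∘ g := rfl
    rw [hco, hc]
    congr 1
    have hfil : cnt (⇑(Equiv.swap j j') ∘ g) j' = cnt g j := by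
      simp only [hcnt]
      congr 1
      ext i
      simp only [Finset.mem_filter, Finset.mem_univ, true_and, Function.comp_apply]
      rw [Equiv.apply_eq_iff_eq_symm_apply, Equiv.symm_swap, Equiv.swap_apply_right]
    rw [hfil]
  have htot : ∀ g : Fin m → Fin m, ∑ j, (cnt g j : ℝ) = m := by
    intro g
    rw [← Nat.cast_sum]
    norm_cast
    simpa [hcnt] using (Finset.sum_card_fiberwise_eq_card_filter Finset.univ Finset.univ g).trans
      (by simp)
  have hKsum : ∑ j, K j = (∑ g : Fin m → Fin m, c g) * m := by
    rw [hK, Finset.sum_comm, Finset.sum_mul]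
    refine Finset.sum_congr rfl fun g _ => ?_
    rw [← Finset.mul_sum, htot]
  have hKval : ∀ j, K j = ∑ g : Fin m → Fin m, c g := by
    intro j
    have h2 : ∑ j', K j' = m * K j := by
      rw [Finset.sum_congr rfl fun j' _ => hswap j' j, Finset.sum_const]
      simp [mul_comm, Nat.cast_smul_eq_nsmul]
    have hmK : (m : ℝ) * K j = (m : ℝ) * ∑ g : Fin m → Fin m, c g := by
      rw [← h2, hKsum, mul_comm]
    exact mul_left_cancel₀ (by exact_mod_cast hm.ne') hmK
  calc ∑ g : Fin m → Fin m, c g • (∑ i, u (g i))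
      = ∑ g : Fin m → Fin m, ∑ j, (c g * cnt g j) • u j := by
        refine Finset.sum_congr rfl fun g _ => ?_
        rw [h1, Finset.smul_sum]
        refine Finset.sum_congr rfl fun j _ => ?_
        rw [smul_smul]
    _ = ∑ j, K j • u j := by
        rw [Finset.sum_comm]
        refine Finset.sum_congr rfl fun j _ => ?_
        rw [hK, Finset.sum_smul]
    _ = (∑ g : Fin m → Fin m, c g) • ∑ j, u j := by
        rw [Finset.smul_sum]
        exact Finset.sum_congr rfl fun j _ => by rw [hKval]

/-- Hoeffding's reduction theorem: for vectors `v 1, ..., v N ∈ ℝ^d`, samples of size `m`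
drawn uniformly without replacement and with replacement, and any continuous convex
`F : ℝ^d → ℝ`, `E[F (Σᵢ Wᵢ)] ≤ E[F (Σᵢ Uᵢ)]`. -/
theorem stmt_10 (N m d : ℕ) (hN : 0 < N) (hm : m ≤ N)
    (v : Fin N → (Fin d → ℝ)) (F : (Fin d → ℝ) → ℝ)
    (hFcont : Continuous F) (hFconv : ConvexOn ℝ Set.univ F) :
    (1 / (Fintype.card (Fin m ↪ Fin N) : ℝ)) * (∑ ω : Fin m ↪ Fin N, F (∑ i, v (ω i)))
      ≤ (1 / (N : ℝ) ^ m) * (∑ ω : Fin m → Fin N, F (∑ i, v (ω i))) := by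
  classical
  set S : (Fin m → Fin N) → (Fin d → ℝ) := fun f => ∑ i, v (f i) with hS
  set w : (Fin m → Fin N) → ℝ := fun f => ((Bcard f : ℝ))⁻¹ with hw
  have hBpos : ∀ f : Fin m → Fin N, (0:ℝ) < (Bcard f : ℝ) := fun f => by
    exact_mod_cast Bcard_pos hm f
  have hwpos : ∀ f, 0 < w f := fun f => inv_pos.2 (hBpos f)
  set t : (Fin m ↪ Fin N) → Finset (Fin m → Fin N) :=
    fun ω => Finset.univ.filter (fun f => rng f ⊆ rng ⇑ω) with ht
  set ι : Fin m ↪ Fin N := Fin.castLEEmb hm with hι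
  set T : ℝ := ∑ f ∈ t ι, w f with hT
  have hTω : ∀ ω : Fin m ↪ Fin N, ∑ f ∈ t ω, w f = T := by
    intro ω
    rw [hT, ht]
    rw [sum_factor ω w, sum_factor ι w]
    refine Finset.sum_congr rfl fun g _ => ?_
    rw [hw]
    simp only []
    congr 2
    refine Bcard_eq ?_
    rw [card_rng_comp ω.injective, card_rng_comp ι.injective]
  have hιmem : ⇑ι ∈ t ι := by
    rw [ht]
    simp only [Finset.mem_filter, Finset.mem_univ, true_and]
    exact Finset.Subset.refl _
  have hTpos : 0 < T := by
    rw [hT]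
    exact Finset.sum_pos (fun f _ => hwpos f) ⟨⇑ι, hιmem⟩
  have hvec : ∀ ω : Fin m ↪ Fin N, ∑ f ∈ t ω, w f • S f = T • S ⇑ω := by
    intro ω
    rw [ht, sum_factor ω (fun f => w f • S f)]
    have hc : ∀ (σ : Equiv.Perm (Fin m)) g, w (⇑ω ∘ (⇑σ ∘ g)) = w (⇑ω ∘ g) := by
      intro σ g
      rw [hw]
      simp only []
      congr 2
      refine Bcard_eq ?_
      rw [card_rng_comp ω.injective, card_rng_comp ω.injective, card_rng_comp σ.injective]
    have hkey := key_smul (fun g => w (⇑ω ∘ g)) hc (fun j => v (ω j))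
    have e1 : ∀ g : Fin m → Fin m, w (⇑ω ∘ g) • S (⇑ω ∘ g)
        = w (⇑ω ∘ g) • ∑ i, v (ω (g i)) := by
      intro g; rfl
    have e2 : ∑ g : Fin m → Fin m, w (⇑ω ∘ g) = T := by
      rw [← sum_factor ω w]; exact hTω ω
    calc ∑ g : Fin m → Fin m, w (⇑ω ∘ g) • S (⇑ω ∘ g)
        = ∑ g : Fin m → Fin m, w (⇑ω ∘ g) • ∑ i, v (ω (g i)) :=
          Finset.sum_congr rfl fun g _ => e1 g
      _ = (∑ g : Fin m → Fin m, w (⇑ω ∘ g)) • ∑ j, v (ω j) := hkey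
      _ = T • S ⇑ω := by rw [e2, hS]
  have hjen : ∀ ω : Fin m ↪ Fin N, T * F (S ⇑ω) ≤ ∑ f ∈ t ω, w f * F (S f) := by
    intro ω
    have hcm : (t ω).centerMass w S = S ⇑ω := by
      rw [Finset.centerMass, hTω ω, hvec ω, smul_smul, inv_mul_cancel₀ hTpos.ne', one_smul]
    have hj := hFconv.map_centerMass_le (t := t ω) (w := w) (p := S)
      (fun f _ => (hwpos f).le) (by rw [hTω ω]; exact hTpos) (fun f _ => Set.mem_univ _)
    rw [hcm, Finset.centerMass, hTω ω] at hj
    have : F (S ⇑ω) ≤ T⁻¹ * ∑ f ∈ t ω, w f * F (S f) := by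
      refine hj.trans_eq ?_
      simp [smul_eq_mul, Function.comp]
    calc T * F (S ⇑ω) ≤ T * (T⁻¹ * ∑ f ∈ t ω, w f * F (S f)) := by
          exact mul_le_mul_of_nonneg_left this hTpos.le
      _ = ∑ f ∈ t ω, w f * F (S f) := by
          rw [← mul_assoc, mul_inv_cancel₀ hTpos.ne', one_mul]
  have hdouble : ∀ ψ : (Fin m → Fin N) → ℝ, (∑ ω : Fin m ↪ Fin N, ∑ f ∈ t ω, ψ f)
      = ∑ f : Fin m → Fin N, (Bcard f : ℝ) * ψ f := by
    intro ψ
    rw [ht]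
    simp only [Finset.sum_filter]
    rw [Finset.sum_comm]
    refine Finset.sum_congr rfl fun f _ => ?_
    rw [← Finset.sum_filter, Finset.sum_const, Bcard, nsmul_eq_mul]
  have hmain : T * ∑ ω : Fin m ↪ Fin N, F (S ⇑ω) ≤ ∑ f : Fin m → Fin N, F (S f) := by
    calc T * ∑ ω : Fin m ↪ Fin N, F (S ⇑ω)
        = ∑ ω : Fin m ↪ Fin N, T * F (S ⇑ω) := Finset.mul_sum _ _ _
      _ ≤ ∑ ω : Fin m ↪ Fin N, ∑ f ∈ t ω, w f * F (S f) :=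
          Finset.sum_le_sum fun ω _ => hjen ω
      _ = ∑ f : Fin m → Fin N, (Bcard f : ℝ) * (w f * F (S f)) :=
          hdouble (fun f => w f * F (S f))
      _ = ∑ f : Fin m → Fin N, F (S f) := by
          refine Finset.sum_congr rfl fun f _ => ?_
          rw [hw]
          simp only []
          rw [← mul_assoc, mul_inv_cancel₀ (hBpos f).ne', one_mul]
  have hcardT : (Fintype.card (Fin m ↪ Fin N) : ℝ) * T = (N : ℝ) ^ m := by
    have h1 : (∑ _ω : Fin m ↪ Fin N, T) = (Fintype.card (Fin m ↪ Fin N) : ℝ) * T := by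
      rw [Finset.sum_const, Finset.card_univ, nsmul_eq_mul]
    have h2 : (∑ _ω : Fin m ↪ Fin N, T) = ∑ f : Fin m → Fin N, (Bcard f : ℝ) * w f := by
      rw [← hdouble w]
      exact Finset.sum_congr rfl fun ω _ => (hTω ω).symm
    have h3 : (∑ f : Fin m → Fin N, (Bcard f : ℝ) * w f) = (N : ℝ) ^ m := by
      have : ∀ f : Fin m → Fin N, (Bcard f : ℝ) * w f = 1 := by
        intro f
        rw [hw]
        simp only []
        rw [mul_inv_cancel₀ (hBpos f).ne']
      rw [Finset.sum_congr rfl fun f _ => this f, Finset.sum_const, Finset.card_univ,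
        nsmul_eq_mul, mul_one]
      rw [Fintype.card_fun]
      simp
    rw [← h1, h2, h3]
  have hCpos : (0:ℝ) < (Fintype.card (Fin m ↪ Fin N) : ℝ) := by
    have : Nonempty (Fin m ↪ Fin N) := ⟨ι⟩
    exact_mod_cast Fintype.card_pos
  have hA : (∑ ω : Fin m ↪ Fin N, F (S ⇑ω)) ≤ T⁻¹ * ∑ f : Fin m → Fin N, F (S f) := by
    calc ∑ ω : Fin m ↪ Fin N, F (S ⇑ω)
        = T⁻¹ * (T * ∑ ω : Fin m ↪ Fin N, F (S ⇑ω)) := by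
          rw [← mul_assoc, inv_mul_cancel₀ hTpos.ne', one_mul]
      _ ≤ T⁻¹ * ∑ f : Fin m → Fin N, F (S f) :=
          mul_le_mul_of_nonneg_left hmain (inv_pos.2 hTpos).le
  have hfrac : (1 / (N : ℝ) ^ m) = (1 / (Fintype.card (Fin m ↪ Fin N) : ℝ)) * T⁻¹ := by
    rw [← hcardT, one_div, one_div, mul_inv]
  have hgoal : (1 / (Fintype.card (Fin m ↪ Fin N) : ℝ)) * (∑ ω : Fin m ↪ Fin N, F (S ⇑ω))
      ≤ (1 / (N : ℝ) ^ m) * (∑ f : Fin m → Fin N, F (S f)) := by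
    rw [hfrac, mul_assoc]
    refine mul_le_mul_of_nonneg_left hA ?_
    positivity
  exact hgoal
end

section
/- Let Q_m and Q'_m be the suprema of the empirical process over sampling with and without replacement respectively, for a finite mean-zero class F of [−1,1]-valued functions on a finite set of size N, with σ² = sup_{f∈F} Var[f], and set v = mσ² + 2E[Q_m]. Assuming Bousquet's bound E[exp(λ(Q_m − E[Q_m]))] ≤ exp(v(e^λ − λ − 1)) for all λ ≥ 0, one has for every ε ≥ 0: P{Q'_m − E[Q_m] ≥ ε} ≤ exp(−v·h(ε/v)), where h(u) = (1+u)log(1+u) − u. -/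
/-!
A uniform map `u : ι → α` has the law of `ω ∘ g`, where `ω : ι ↪ α` is a uniform embedding and
`g : ι → ι` is an independent random pattern, drawn with weights `resampleWeight α g` that are
invariant under permutations of `ι`. By this exchangeability each `g i` is uniform on `ι`, so
`∑ i, f (ω i)` is the conditional mean of `∑ i, f (ω (g i))` given `ω`. Applying Jensen's
inequality for the convex increasing map `x ↦ exp (λ (x - E Q_m))` to a maximising `f` gives
Hoeffding's comparison `E exp (λ Q'_m) ≤ E exp (λ Q_m)`, and Chernoff's bound at
`λ = log (1 + ε / v)` turns Bousquet's bound into the tail bound.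
-/

open Finset Fintype

theorem card_embedding_comp_eq {κ ι α : Type*} [Fintype κ] [Fintype ι] [Fintype α]
    [DecidableEq ι] [DecidableEq α] (e : κ ↪ ι) (t : κ ↪ α) :
    #{ω : ι ↪ α | ⇑ω ∘ e = t} = (card α - card κ).descFactorial (card ι - card κ) := by
  let E : (ι ↪ α) ≃ Σ f : κ ↪ α, ↥(Set.range e)ᶜ ↪ ↥(Set.range f)ᶜ :=
    (Equiv.embeddingCongr ((Equiv.sumCongr (Equiv.ofInjective e e.injective) (Equiv.refl _)).trans
      (Equiv.sumCompl (· ∈ Set.range e))) (Equiv.refl α)).symm.trans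
      Equiv.sumEmbeddingEquivSigmaEmbeddingRestricted
  have hE : {ω : ι ↪ α // ⇑ω ∘ e = t} ≃
      {x : Σ f : κ ↪ α, ↥(Set.range e)ᶜ ↪ ↥(Set.range f)ᶜ // x.1 = t} :=
    E.subtypeEquiv fun ω => by rw [Function.Embedding.ext_iff, funext_iff]; rfl
  rw [← Fintype.card_subtype, Fintype.card_congr (hE.trans (Equiv.sigmaSubtype t)),
    Fintype.card_embedding_eq, Fintype.card_compl_set, Fintype.card_range,
    Fintype.card_compl_set, Fintype.card_range]

section Resampling

variable {ι α : Type*} [Fintype ι] [Fintype α]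

theorem sum_mul_sum_comp_eq_of_perm_invariant [DecidableEq ι] {W : (ι → ι) → ℝ}
    (hW : ∀ (σ : Equiv.Perm ι) g, W (σ ∘ g) = W g) (hW₁ : ∑ g, W g = 1) (h : ι → ℝ) :
    ∑ g, W g * ∑ i, h (g i) = ∑ j, h j := by
  have hmarginal (i j : ι) : ∑ g with g i = j, W g = 1 / card ι := by
    have hswap (j' : ι) : ∑ g with g i = j, W g = ∑ g with g i = j', W g :=
      Finset.sum_equiv ((Equiv.refl ι).arrowCongr (Equiv.swap j j'))
        (by simp [Equiv.swap_apply_eq_iff]) fun g _ => (hW (Equiv.swap j j') g).symm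
    have : Nonempty ι := ⟨i⟩
    rw [eq_div_iff (Nat.cast_ne_zero.mpr card_ne_zero), ← hW₁, ← sum_fiberwise univ (· i) W]
    simp [← hswap, mul_comm]
  calc ∑ g, W g * ∑ i, h (g i)
      = ∑ i, ∑ j, ∑ g with g i = j, W g * h (g i) := by
        simp only [mul_sum, Finset.sum_fiberwise]
        exact Finset.sum_comm
    _ = ∑ i, ∑ j, (1 / card ι : ℝ) * h j := by
        refine sum_congr rfl fun i _ => sum_congr rfl fun j _ => ?_
        rw [← hmarginal i j, sum_mul]
        exact sum_congr rfl fun g hg => by rw [(mem_filter.mp hg).2]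
    _ = ∑ j, h j := by
        rcases isEmpty_or_nonempty ι with hι | hι
        · simp
        · rw [sum_const, card_univ, nsmul_eq_mul, ← mul_sum, ← mul_assoc,
            mul_one_div_cancel (Nat.cast_ne_zero.mpr card_ne_zero), one_mul]

/-- `(card α).descFactorial k / card α ^ card ι`, with `k = #(range g)`, is the probability that a
uniform map `ι → α` has the same kernel as `g`; it is shared evenly among the
`(card ι).descFactorial k` maps `ι → ι` with that kernel. -/
noncomputable def resampleWeight (α : Type*) [Fintype α] {ι : Type*} [Fintype ι]
    (g : ι → ι) : ℝ :=
  (card α).descFactorial (Nat.card (Set.range g)) /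
    ((card α : ℝ) ^ card ι * (card ι).descFactorial (Nat.card (Set.range g)))

theorem resampleWeight_nonneg (g : ι → ι) : 0 ≤ resampleWeight α g := by
  unfold resampleWeight
  positivity

theorem resampleWeight_perm_comp (σ : Equiv.Perm ι) (g : ι → ι) :
    resampleWeight α (σ ∘ g) = resampleWeight α g := by
  rw [resampleWeight, resampleWeight, Set.range_comp, Nat.card_image_of_injective σ.injective]

theorem sum_embedding_sum_resampleWeight_ite [DecidableEq ι] [DecidableEq α] (u : ι → α) :
    ∑ ω : ι ↪ α, ∑ g : ι → ι, (if ⇑ω ∘ g = u then resampleWeight α g else 0) =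
      (card α).descFactorial (card ι) / (card α : ℝ) ^ card ι := by
  set R := Set.range u
  set k := card R with hkdef
  have hk : k ≤ card ι := Fintype.card_range_le u
  let pattern : (R ↪ ι) → ι → ι := fun e => e ∘ Set.rangeFactorization u
  have hfiber (e : R ↪ ι) (ω : ι ↪ α) :
      ⇑ω ∘ pattern e = u ↔ ⇑ω ∘ e = Function.Embedding.subtype (· ∈ R) :=
    show (⇑ω ∘ e) ∘ Set.rangeFactorization u = Subtype.val ∘ Set.rangeFactorization u ↔ _ from
      Set.rangeFactorization_surjective.injective_comp_right.eq_iff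
  have hweight (e : R ↪ ι) : resampleWeight α (pattern e) =
      (card α).descFactorial k / ((card α : ℝ) ^ card ι * (card ι).descFactorial k) := by
    rw [resampleWeight, Set.rangeFactorization_surjective.range_comp,
      Nat.card_range_of_injective e.injective, Nat.card_eq_fintype_card]
  have hsupport (g : ι → ι) (ω : ι ↪ α) (h : ⇑ω ∘ g = u) : g ∈ Set.range pattern := by
    let s := Function.surjInv (Set.rangeFactorization_surjective (f := u))
    have hs (y : R) : u (s y) = y :=
      congrArg Subtype.val (Function.surjInv_eq Set.rangeFactorization_surjective y)
    refine ⟨⟨fun y => g (s y), fun y y' hyy' => Subtype.ext ?_⟩, funext fun i => ?_⟩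
    · rw [← hs y, ← hs y', ← h]
      exact congrArg ω hyy'
    · refine ω.injective ?_
      change (⇑ω ∘ g) (s (Set.rangeFactorization u i)) = (⇑ω ∘ g) i
      rw [h, hs]
      rfl
  rw [sum_comm]
  calc ∑ g : ι → ι, ∑ ω : ι ↪ α, (if ⇑ω ∘ g = u then resampleWeight α g else 0)
      = ∑ g : ι → ι, #{ω : ι ↪ α | ⇑ω ∘ g = u} * resampleWeight α g := by
        simp only [sum_ite, sum_const_zero, add_zero, sum_const, nsmul_eq_mul]
    _ = ∑ e : R ↪ ι, #{ω : ι ↪ α | ⇑ω ∘ pattern e = u} * resampleWeight α (pattern e) := by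
        refine (Fintype.sum_of_injective pattern ?_ _ _ (fun g hg => ?_) fun e => rfl).symm
        · exact fun e e' h => DFunLike.coe_injective
            (Set.rangeFactorization_surjective.injective_comp_right h)
        · rw [Finset.card_eq_zero.mpr, Nat.cast_zero, zero_mul]
          exact filter_eq_empty_iff.mpr fun ω _ h => hg (hsupport g ω h)
    _ = ∑ e : R ↪ ι, ((card α - k).descFactorial (card ι - k) *
          ((card α).descFactorial k / ((card α : ℝ) ^ card ι * (card ι).descFactorial k))) := by
        refine sum_congr rfl fun e _ => ?_
        rw [filter_congr fun ω _ => hfiber e ω, hweight,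
          card_embedding_comp_eq e (Function.Embedding.subtype _)]
    _ = (card α).descFactorial (card ι) / (card α : ℝ) ^ card ι := by
        have : ((card ι).descFactorial k : ℝ) ≠ 0 := by
          exact_mod_cast (Nat.descFactorial_pos.mpr hk).ne'
        rw [sum_const, card_univ, card_embedding_eq, nsmul_eq_mul,
          ← Nat.descFactorial_mul_descFactorial hk, ← hkdef]
        push_cast
        field_simp

theorem sum_embedding_sum_resampleWeight_mul_comp [DecidableEq ι] [DecidableEq α]
    (Ψ : (ι → α) → ℝ) :
    ∑ ω : ι ↪ α, ∑ g : ι → ι, resampleWeight α g * Ψ (ω ∘ g) =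
      (card α).descFactorial (card ι) / (card α : ℝ) ^ card ι * ∑ u, Ψ u := by
  calc ∑ ω : ι ↪ α, ∑ g : ι → ι, resampleWeight α g * Ψ (ω ∘ g)
      = ∑ ω : ι ↪ α, ∑ g : ι → ι, ∑ u, (if ⇑ω ∘ g = u then resampleWeight α g else 0) * Ψ u := by
        simp only [ite_mul, zero_mul, Fintype.sum_ite_eq]
    _ = ∑ u, (∑ ω : ι ↪ α, ∑ g : ι → ι, if ⇑ω ∘ g = u then resampleWeight α g else 0) * Ψ u := by
        simp only [sum_mul]
        exact (Finset.sum_congr rfl fun _ _ => Finset.sum_comm).trans Finset.sum_comm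
    _ = _ := by simp only [sum_embedding_sum_resampleWeight_ite, ← mul_sum]

theorem sum_resampleWeight [DecidableEq ι] (h : card ι ≤ card α) :
    ∑ g : ι → ι, resampleWeight α g = 1 := by
  classical
  have hmix := sum_embedding_sum_resampleWeight_mul_comp (ι := ι) (α := α) fun _ => 1
  have : Nonempty (ι → α) := ⟨(Function.Embedding.nonempty_of_card_le h).some⟩
  have hpow : ((card α : ℝ) ^ card ι) ≠ 0 := by
    rw [← Nat.cast_pow, ← card_fun]
    exact_mod_cast Fintype.card_pos.ne'
  have hdesc : ((card α).descFactorial (card ι) : ℝ) ≠ 0 := by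
    exact_mod_cast (Nat.descFactorial_pos.mpr h).ne'
  simp only [mul_one, sum_const, card_univ, card_embedding_eq, card_fun, nsmul_eq_mul] at hmix
  push_cast at hmix
  rw [div_mul_cancel₀ _ hpow] at hmix
  exact (mul_eq_left₀ hdesc).mp hmix

def empiricalSup (F : Finset (α → ℝ)) (hF : F.Nonempty) (x : ι → α) : ℝ :=
  F.sup' hF fun f => ∑ i, f (x i)

theorem comp_empiricalSup_le_sum_resampleWeight [DecidableEq ι] (h : card ι ≤ card α)
    (F : Finset (α → ℝ)) (hF : F.Nonempty) {φ : ℝ → ℝ} (hφ : ConvexOn ℝ Set.univ φ)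
    (hφm : Monotone φ) (x : ι → α) :
    φ (empiricalSup F hF x) ≤
      ∑ g : ι → ι, resampleWeight α g * φ (empiricalSup F hF (x ∘ g)) := by
  obtain ⟨f, hf, hsup⟩ := exists_mem_eq_sup' hF fun f => ∑ i, f (x i)
  have hmean : ∑ g : ι → ι, resampleWeight α g • ∑ i, f (x (g i)) = ∑ i, f (x i) :=
    sum_mul_sum_comp_eq_of_perm_invariant (resampleWeight_perm_comp (α := α))
      (sum_resampleWeight h) (f ∘ x)
  calc φ (empiricalSup F hF x)
      = φ (∑ g : ι → ι, resampleWeight α g • ∑ i, f (x (g i))) := by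
        rw [empiricalSup, hsup, hmean]
    _ ≤ ∑ g : ι → ι, resampleWeight α g • φ (∑ i, f (x (g i))) :=
        hφ.map_sum_le (fun g _ => resampleWeight_nonneg g) (sum_resampleWeight h)
          fun _ _ => Set.mem_univ _
    _ ≤ ∑ g : ι → ι, resampleWeight α g * φ (empiricalSup F hF (x ∘ g)) :=
        sum_le_sum fun g _ => mul_le_mul_of_nonneg_left
          (hφm (le_sup' (fun f => ∑ i, f ((x ∘ g) i)) hf)) (resampleWeight_nonneg g)

theorem mean_comp_empiricalSup_embedding_le [DecidableEq ι] [DecidableEq α]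
    (h : card ι ≤ card α) (F : Finset (α → ℝ)) (hF : F.Nonempty) {φ : ℝ → ℝ}
    (hφ : ConvexOn ℝ Set.univ φ) (hφm : Monotone φ) :
    1 / (card (ι ↪ α) : ℝ) * ∑ ω : ι ↪ α, φ (empiricalSup F hF ω) ≤
      1 / (card (ι → α) : ℝ) * ∑ u : ι → α, φ (empiricalSup F hF u) := by
  have hdesc : 0 < ((card α).descFactorial (card ι) : ℝ) := by
    exact_mod_cast Nat.descFactorial_pos.mpr h
  calc 1 / (card (ι ↪ α) : ℝ) * ∑ ω : ι ↪ α, φ (empiricalSup F hF ω)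
      ≤ 1 / (card (ι ↪ α) : ℝ) * ∑ ω : ι ↪ α, ∑ g : ι → ι,
          resampleWeight α g * φ (empiricalSup F hF (ω ∘ g)) := by
        gcongr with ω
        exact comp_empiricalSup_le_sum_resampleWeight h F hF hφ hφm ω
    _ = 1 / (card (ι → α) : ℝ) * ∑ u : ι → α, φ (empiricalSup F hF u) := by
        rw [sum_embedding_sum_resampleWeight_mul_comp fun u => φ (empiricalSup F hF u),
          card_embedding_eq, card_fun]
        push_cast
        field_simp

end Resampling

theorem convexOn_exp_mul_sub (l c : ℝ) : ConvexOn ℝ Set.univ fun x => Real.exp (l * (x - c)) := by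
  simpa [Function.comp_def, sub_eq_neg_add] using
    (convexOn_exp.comp_linearMap (LinearMap.lsmul ℝ ℝ l)).translate_right (-c)

theorem monotone_exp_mul_sub {l : ℝ} (hl : 0 ≤ l) (c : ℝ) :
    Monotone fun x => Real.exp (l * (x - c)) :=
  fun _ _ hxy => Real.exp_le_exp.mpr (by gcongr)

theorem one_le_mean_exp_sub_mean {β : Type*} [Fintype β] [Nonempty β] (X : β → ℝ) :
    1 ≤ 1 / (card β : ℝ) * ∑ b, Real.exp (X b - 1 / (card β : ℝ) * ∑ b', X b') := by
  have hcard : (0 : ℝ) < card β := by exact_mod_cast Fintype.card_pos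
  calc (1 : ℝ) = 1 / (card β : ℝ) * ∑ b, (X b - 1 / (card β : ℝ) * ∑ b', X b' + 1) := by
        rw [sum_add_distrib, sum_sub_distrib]
        simp only [sum_const, card_univ, nsmul_eq_mul]
        field_simp
        ring
    _ ≤ 1 / (card β : ℝ) * ∑ b, Real.exp (X b - 1 / (card β : ℝ) * ∑ b', X b') := by
        gcongr
        exact Real.add_one_le_exp _

theorem card_filter_le_exp_of_mgf_le {β : Type*} [Fintype β] [Nonempty β] (X : β → ℝ)
    {v ε : ℝ} (hv : 0 ≤ v) (hε : 0 ≤ ε)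
    (hmgf : ∀ l : ℝ, 0 ≤ l →
      1 / (card β : ℝ) * ∑ b, Real.exp (l * X b) ≤ Real.exp (v * (Real.exp l - l - 1))) :
    (#{b | ε ≤ X b} : ℝ) / card β ≤
      Real.exp (-(v * ((1 + ε / v) * Real.log (1 + ε / v) - ε / v))) := by
  have hcard : (0 : ℝ) < card β := by exact_mod_cast Fintype.card_pos
  rcases hv.eq_or_lt with rfl | hv
  · simp only [div_zero, add_zero, Real.log_one, mul_zero, sub_zero, neg_zero, Real.exp_zero]
    rw [div_le_one hcard]
    exact_mod_cast (card_filter_le _ _).trans_eq card_univ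
  set l := Real.log (1 + ε / v)
  have hexp : Real.exp l = 1 + ε / v := Real.exp_log (by positivity)
  have hl : 0 ≤ l := Real.log_nonneg (by simp; positivity)
  have hmarkov : (#{b | ε ≤ X b} : ℝ) * Real.exp (l * ε) ≤ ∑ b, Real.exp (l * X b) := by
    calc (#{b | ε ≤ X b} : ℝ) * Real.exp (l * ε) = ∑ b with ε ≤ X b, Real.exp (l * ε) := by
          rw [sum_const, nsmul_eq_mul]
      _ ≤ ∑ b with ε ≤ X b, Real.exp (l * X b) :=
          sum_le_sum fun b hb => by gcongr; exact (mem_filter.mp hb).2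
      _ ≤ ∑ b, Real.exp (l * X b) :=
          sum_le_sum_of_subset_of_nonneg (filter_subset _ _) fun _ _ _ => (Real.exp_pos _).le
  have hexponent : v * (Real.exp l - l - 1) - l * ε =
      -(v * ((1 + ε / v) * l - ε / v)) := by
    rw [hexp]
    field_simp
    ring
  rw [← hexponent, Real.exp_sub, div_le_div_iff₀ hcard (Real.exp_pos _)]
  calc (#{b | ε ≤ X b} : ℝ) * Real.exp (l * ε) ≤ ∑ b, Real.exp (l * X b) := hmarkov
    _ ≤ Real.exp (v * (Real.exp l - l - 1)) * card β := by
        have := hmgf l hl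
        rw [div_mul_eq_mul_div, one_mul, div_le_iff₀ hcard] at this
        exact this

theorem stmt_14_general (N m : ℕ) (hm : m ≤ N)
    (F : Finset (Fin N → ℝ)) (hF : F.Nonempty)
    (Qm : (Fin m → Fin N) → ℝ)
    (hQm : ∀ ω, Qm ω = F.sup' hF fun f => ∑ i, f (ω i))
    (EQm : ℝ)
    (hEQm : EQm = (1 / (N : ℝ) ^ m) * ∑ ω : Fin m → Fin N, Qm ω)
    (Q' : (Fin m ↪ Fin N) → ℝ)
    (hQ' : ∀ ω, Q' ω = F.sup' hF fun f => ∑ i, f (ω i))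
    (v : ℝ)
    (hBousquet : ∀ l : ℝ, 0 ≤ l →
      (1 / (N : ℝ) ^ m) * (∑ ω : Fin m → Fin N, Real.exp (l * (Qm ω - EQm)))
        ≤ Real.exp (v * (Real.exp l - l - 1)))
    (ε : ℝ) (hε : 0 ≤ ε) :
    ((Finset.univ.filter fun ω : Fin m ↪ Fin N => ε ≤ Q' ω - EQm).card : ℝ) /
        (Fintype.card (Fin m ↪ Fin N) : ℝ)
      ≤ Real.exp (-(v * ((1 + ε / v) * Real.log (1 + ε / v) - ε / v))) := by
  have hcard : (card (Fin m → Fin N) : ℝ) = (N : ℝ) ^ m := by simp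
  have : Nonempty (Fin m → Fin N) := ⟨fun i => Fin.castLE hm i⟩
  have hmN : card (Fin m) ≤ card (Fin N) := by simpa using hm
  have : Nonempty (Fin m ↪ Fin N) := Function.Embedding.nonempty_of_card_le hmN
  -- `1 ≤ E exp (Q_m - E Q_m) ≤ exp (v (e - 2))` by `exp x ≥ 1 + x` and Bousquet's bound at `l = 1`.
  have hv : 0 ≤ v := by
    have hmean := one_le_mean_exp_sub_mean Qm
    rw [hcard, ← hEQm] at hmean
    have h := hmean.trans (by simpa only [one_mul] using hBousquet 1 zero_le_one)
    have he : 0 < Real.exp 1 - 1 - 1 := by linarith [Real.exp_one_gt_d9]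
    exact nonneg_of_mul_nonneg_left (Real.one_le_exp_iff.mp h) he
  refine card_filter_le_exp_of_mgf_le (fun ω => Q' ω - EQm) hv hε fun l hl => ?_
  calc 1 / (card (Fin m ↪ Fin N) : ℝ) * ∑ ω, Real.exp (l * (Q' ω - EQm))
      ≤ 1 / (N : ℝ) ^ m * ∑ u, Real.exp (l * (Qm u - EQm)) := by
        simpa [empiricalSup, hQ', hQm, hcard] using
          mean_comp_empiricalSup_embedding_le hmN F hF (convexOn_exp_mul_sub l EQm)
            (monotone_exp_mul_sub hl EQm)
    _ ≤ Real.exp (v * (Real.exp l - l - 1)) := hBousquet l hl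

/-- Talagrand-type inequality for sampling without replacement: with
`v = mσ² + 2E[Q_m]` and assuming Bousquet's moment generating function bound for
`Q_m`, for every `ε ≥ 0` one has `P{Q'_m − E[Q_m] ≥ ε} ≤ exp(−v·h(ε/v))`, where
`h u = (1+u)log(1+u) − u`. -/
theorem stmt_14 (N m : ℕ) (hN : 0 < N) (hm : m ≤ N)
    (F : Finset (Fin N → ℝ)) (hF : F.Nonempty)
    (hbound : ∀ f ∈ F, ∀ x, f x ∈ Set.Icc (-1 : ℝ) 1)
    (hmean : ∀ f ∈ F, ∑ x, f x = 0)
    (σ2 : ℝ)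
    (hσ2 : σ2 = F.sup' hF fun f =>
      (1 / (N : ℝ)) * ∑ x, (f x - (1 / (N : ℝ)) * ∑ y, f y) ^ 2)
    (Qm : (Fin m → Fin N) → ℝ)
    (hQm : ∀ ω, Qm ω = F.sup' hF fun f => ∑ i, f (ω i))
    (EQm : ℝ)
    (hEQm : EQm = (1 / (N : ℝ) ^ m) * ∑ ω : Fin m → Fin N, Qm ω)
    (Q' : (Fin m ↪ Fin N) → ℝ)
    (hQ' : ∀ ω, Q' ω = F.sup' hF fun f => ∑ i, f (ω i))
    (v : ℝ) (hv : v = (m : ℝ) * σ2 + 2 * EQm)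
    (hBousquet : ∀ l : ℝ, 0 ≤ l →
      (1 / (N : ℝ) ^ m) * (∑ ω : Fin m → Fin N, Real.exp (l * (Qm ω - EQm)))
        ≤ Real.exp (v * (Real.exp l - l - 1)))
    (ε : ℝ) (hε : 0 ≤ ε) :
    ((Finset.univ.filter fun ω : Fin m ↪ Fin N => ε ≤ Q' ω - EQm).card : ℝ) /
        (Fintype.card (Fin m ↪ Fin N) : ℝ)
      ≤ Real.exp (-(v * ((1 + ε / v) * Real.log (1 + ε / v) - ε / v))) :=
  stmt_14_general N m hm F hF Qm hQm EQm hEQm Q' hQ' v hBousquet ε hε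
end
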